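/- Let S1, W1, X1, X2, Y be finite-valued random variables on a common probability space such that (i) I(S1; Y | X1, X2, W1) = 0 (the chain S1 – X1 – Y holds given (X2, W1)), and (ii) I(X2; S1 | W1) = 0 (X2 and S1 are conditionally independent given W1). Then I(X1; Y | X2, W1) ≥ H(S1 | W1) − H(S1 | Y, W1). -/

import Mathlib

open scoped BigOperators Classical

noncomputable section

/-- Probability that the random variable `X` equals `a`, under the pmf `μ`
on the finite sample space `Ω`. -/
def prD {Ω α : Type} [Fintype Ω] (μ : Ω → ℝ) (X : Ω → α) (a : α) : ℝ :=
  ∑ ω, if X ω = a then μ ω else 0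

/-- Shannon entropy (in nats) of the random variable `X` under the pmf `μ`. -/
def ent {Ω α : Type} [Fintype Ω] [Fintype α] (μ : Ω → ℝ) (X : Ω → α) : ℝ :=
  -∑ a, prD μ X a * Real.log (prD μ X a)

/-- Conditional entropy `H(X | Y)` under the pmf `μ`. -/
def condEnt {Ω α β : Type} [Fintype Ω] [Fintype α] [Fintype β]
    (μ : Ω → ℝ) (X : Ω → α) (Y : Ω → β) : ℝ :=
  ent μ (fun ω => (X ω, Y ω)) - ent μ Y

/-- Mutual information `I(X ; Y)` under the pmf `μ`. -/
def mutInf {Ω α β : Type} [Fintype Ω] [Fintype α] [Fintype β]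
    (μ : Ω → ℝ) (X : Ω → α) (Y : Ω → β) : ℝ :=
  ent μ X + ent μ Y - ent μ (fun ω => (X ω, Y ω))

/-- Conditional mutual information `I(X ; Y | Z)` under the pmf `μ`. -/
def condMutInf {Ω α β γ : Type} [Fintype Ω] [Fintype α] [Fintype β] [Fintype γ]
    (μ : Ω → ℝ) (X : Ω → α) (Y : Ω → β) (Z : Ω → γ) : ℝ :=
  condEnt μ X Z - condEnt μ X (fun ω => (Y ω, Z ω))

/-- `p` is a probability mass function on the finite type `α`. -/
def IsPmf {α : Type} [Fintype α] (p : α → ℝ) : Prop :=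
  (∀ a, 0 ≤ p a) ∧ ∑ a, p a = 1

/-!
Conditioning additionally on `X2` can only increase the information `Y` carries about `S1`,
and because `X2` is conditionally independent of `S1` given `W1` the chain rule shows this
costs nothing: `I(S1; Y | W1) ≤ I(S1; X2, Y | W1) = I(S1; Y | X2, W1)`. The Markov chain
`S1 – X1 – Y` given `(X2, W1)` then gives, again by the chain rule, the data processing bound
`I(S1; Y | X2, W1) ≤ I(X1; Y | X2, W1)`. Both steps rest on the nonnegativity of conditional
mutual information, which is Gibbs' inequality for the joint law of `(X, Y)` given `Z = z`
against the product of its marginals.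
-/

open Finset Real

theorem sub_le_mul_log_sub_log {p q : ℝ} (hp : 0 ≤ p) (hq : 0 ≤ q) (hpq : p ≠ 0 → q ≠ 0) :
    p - q ≤ p * (log p - log q) := by
  rcases hp.eq_or_lt with rfl | hp
  · simpa using hq
  have hq : 0 < q := hq.lt_of_ne' (hpq hp.ne')
  have hlog := one_sub_inv_le_log_of_pos (div_pos hp hq)
  rw [inv_div, log_div hp.ne' hq.ne'] at hlog
  calc p - q = p * (1 - q / p) := by field_simp
    _ ≤ p * (log p - log q) := mul_le_mul_of_nonneg_left hlog hp.le

theorem sum_mul_log_marginals_le {α β : Type} [Fintype α] [Fintype β] (p : α → β → ℝ)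
    (hp : ∀ x y, 0 ≤ p x y) :
    ∑ x, (∑ y, p x y) * log (∑ y, p x y) + ∑ y, (∑ x, p x y) * log (∑ x, p x y) ≤
      (∑ x, ∑ y, p x y) * log (∑ x, ∑ y, p x y) + ∑ x, ∑ y, p x y * log (p x y) := by
  set a := fun x => ∑ y, p x y
  set b := fun y => ∑ x, p x y
  set s := ∑ x, ∑ y, p x y
  have ha x : 0 ≤ a x := sum_nonneg fun y _ => hp x y
  have hb y : 0 ≤ b y := sum_nonneg fun x _ => hp x y
  have hs : 0 ≤ s := sum_nonneg fun x _ => ha x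
  have hpa x y : p x y ≤ a x := single_le_sum (fun y _ => hp x y) (mem_univ y)
  have hpb x y : p x y ≤ b y := single_le_sum (fun x _ => hp x y) (mem_univ x)
  have hps x y : p x y ≤ s := (hpa x y).trans (single_le_sum (fun x _ => ha x) (mem_univ x))
  have hsupp x y (h : p x y ≠ 0) : a x ≠ 0 ∧ b y ≠ 0 ∧ s ≠ 0 := by
    have hpos := (hp x y).lt_of_ne' h
    exact ⟨(hpos.trans_le (hpa x y)).ne', (hpos.trans_le (hpb x y)).ne',
      (hpos.trans_le (hps x y)).ne'⟩
  -- `q x y = a x * b y / s`; when `s = 0` the junk value `q = 0` is harmless as then `p = 0`.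
  have hq : ∑ x, ∑ y, a x * b y / s = s := by
    have hbs : ∑ y, b y = s := Finset.sum_comm
    simp_rw [← Finset.sum_div, ← Finset.mul_sum, ← Finset.sum_mul, hbs]
    exact mul_self_div_self s
  have hlog : ∑ x, ∑ y, p x y * log (a x * b y / s) =
      ∑ x, a x * log (a x) + ∑ y, b y * log (b y) - s * log s := by
    have h x y : p x y * log (a x * b y / s) =
        p x y * log (a x) + p x y * log (b y) - p x y * log s := by
      by_cases h0 : p x y = 0
      · simp [h0]
      obtain ⟨ha, hb, hs⟩ := hsupp x y h0
      rw [log_div (mul_ne_zero ha hb) hs, log_mul ha hb]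
      ring
    simp_rw [h, Finset.sum_sub_distrib, Finset.sum_add_distrib, ← Finset.sum_mul]
    rw [Finset.sum_comm (f := fun x y => p x y * log (b y))]
    simp_rw [← Finset.sum_mul]
    rfl
  have gibbs := sum_le_sum fun x (_ : x ∈ univ) => sum_le_sum fun y (_ : y ∈ univ) =>
    sub_le_mul_log_sub_log (hp x y) (div_nonneg (mul_nonneg (ha x) (hb y)) hs) fun h =>
      div_ne_zero (mul_ne_zero (hsupp x y h).1 (hsupp x y h).2.1) (hsupp x y h).2.2
  simp_rw [mul_sub, Finset.sum_sub_distrib] at gibbs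
  rw [hq, hlog] at gibbs
  linarith

section
variable {Ω α β γ δ : Type} [Fintype Ω]

theorem prD_nonneg {μ : Ω → ℝ} (hμ : ∀ ω, 0 ≤ μ ω) (X : Ω → α) (a : α) : 0 ≤ prD μ X a :=
  sum_nonneg fun ω _ => by split_ifs <;> simp [hμ ω]

theorem sum_prD_pair_fst [Fintype α] (μ : Ω → ℝ) (X : Ω → α) (Y : Ω → β) (y : β) :
    ∑ x, prD μ (fun ω => (X ω, Y ω)) (x, y) = prD μ Y y := by
  unfold prD
  rw [Finset.sum_comm]
  refine sum_congr rfl fun ω _ => ?_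
  simp [Prod.ext_iff, ite_and]

theorem sum_prD_triple_mid [Fintype β] (μ : Ω → ℝ) (X : Ω → α) (Y : Ω → β) (Z : Ω → γ)
    (x : α) (z : γ) :
    ∑ y, prD μ (fun ω => (X ω, Y ω, Z ω)) (x, y, z) = prD μ (fun ω => (X ω, Z ω)) (x, z) := by
  unfold prD
  rw [Finset.sum_comm]
  refine sum_congr rfl fun ω _ => ?_
  simp [Prod.ext_iff, ite_and]

theorem ent_congr_equiv [Fintype α] [Fintype β] (μ : Ω → ℝ) (e : α ≃ β) {X : Ω → α}
    {Y : Ω → β} (h : ∀ ω, e (X ω) = Y ω) : ent μ X = ent μ Y := by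
  have hpr b : prD μ Y b = prD μ X (e.symm b) := by
    simp only [prD, ← h, ← Equiv.eq_symm_apply]
  simp only [ent, hpr]
  rw [e.symm.sum_comp (fun a => prD μ X a * log (prD μ X a))]

variable [Fintype α] [Fintype β] [Fintype γ] [Fintype δ]

theorem condMutInf_comm (μ : Ω → ℝ) (X : Ω → α) (Y : Ω → β) (Z : Ω → γ) :
    condMutInf μ X Y Z = condMutInf μ Y X Z := by
  let e : α × β × γ ≃ β × α × γ :=
    { toFun := fun p => (p.2.1, p.1, p.2.2), invFun := fun p => (p.2.1, p.1, p.2.2),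
      left_inv := fun _ => rfl, right_inv := fun _ => rfl }
  have h : ent μ (fun ω => (X ω, Y ω, Z ω)) = ent μ (fun ω => (Y ω, X ω, Z ω)) :=
    ent_congr_equiv μ e fun _ => rfl
  simp only [condMutInf, condEnt, h]
  ring

theorem condMutInf_chain (μ : Ω → ℝ) (X : Ω → α) (Y : Ω → β) (Z : Ω → γ) (W : Ω → δ) :
    condMutInf μ X (fun ω => (Y ω, Z ω)) W =
      condMutInf μ X Z W + condMutInf μ X Y (fun ω => (Z ω, W ω)) := by
  have h₁ : ent μ (fun ω => (X ω, (Y ω, Z ω), W ω)) = ent μ (fun ω => (X ω, Y ω, Z ω, W ω)) :=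
    ent_congr_equiv μ ((Equiv.refl α).prodCongr (Equiv.prodAssoc β γ δ)) fun _ => rfl
  have h₂ : ent μ (fun ω => ((Y ω, Z ω), W ω)) = ent μ (fun ω => (Y ω, Z ω, W ω)) :=
    ent_congr_equiv μ (Equiv.prodAssoc β γ δ) fun _ => rfl
  simp only [condMutInf, condEnt, h₁, h₂]
  ring

theorem condMutInf_pair_comm (μ : Ω → ℝ) (X : Ω → α) (Y : Ω → β) (Z : Ω → γ) (W : Ω → δ) :
    condMutInf μ X (fun ω => (Y ω, Z ω)) W = condMutInf μ X (fun ω => (Z ω, Y ω)) W := by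
  have h₁ : ent μ (fun ω => (X ω, (Y ω, Z ω), W ω)) = ent μ (fun ω => (X ω, (Z ω, Y ω), W ω)) :=
    ent_congr_equiv μ
      ((Equiv.refl α).prodCongr ((Equiv.prodComm β γ).prodCongr (Equiv.refl δ))) fun _ => rfl
  have h₂ : ent μ (fun ω => ((Y ω, Z ω), W ω)) = ent μ (fun ω => ((Z ω, Y ω), W ω)) :=
    ent_congr_equiv μ ((Equiv.prodComm β γ).prodCongr (Equiv.refl δ)) fun _ => rfl
  simp only [condMutInf, condEnt, h₁, h₂]

theorem condMutInf_nonneg {μ : Ω → ℝ} (hμ : ∀ ω, 0 ≤ μ ω) (X : Ω → α) (Y : Ω → β)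
    (Z : Ω → γ) : 0 ≤ condMutInf μ X Y Z := by
  let P x y z := prD μ (fun ω => (X ω, Y ω, Z ω)) (x, y, z)
  have hXYZ : ent μ (fun ω => (X ω, Y ω, Z ω)) = -∑ z, ∑ y, ∑ x, P x y z * log (P x y z) := by
    simp only [ent, Fintype.sum_prod_type_right, P]
  have hXZ : ent μ (fun ω => (X ω, Z ω)) = -∑ z, ∑ x, (∑ y, P x y z) * log (∑ y, P x y z) := by
    simp only [ent, Fintype.sum_prod_type_right, P, sum_prD_triple_mid]
  have hYZ : ent μ (fun ω => (Y ω, Z ω)) = -∑ z, ∑ y, (∑ x, P x y z) * log (∑ x, P x y z) := by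
    simp only [ent, Fintype.sum_prod_type_right, P, sum_prD_pair_fst]
  have hZ : ent μ Z = -∑ z, (∑ y, ∑ x, P x y z) * log (∑ y, ∑ x, P x y z) := by
    simp only [ent, P, sum_prD_pair_fst]
  have hgibbs := sum_le_sum fun z (_ : z ∈ univ) =>
    sum_mul_log_marginals_le (fun y x => P x y z) fun y x => prD_nonneg hμ _ _
  simp only [sum_add_distrib] at hgibbs
  simp only [condMutInf, condEnt, hXYZ, hXZ, hYZ, hZ]
  linarith

theorem condMutInf_le_condMutInf_pair {μ : Ω → ℝ} (hμ : ∀ ω, 0 ≤ μ ω) (X : Ω → α) (Y : Ω → β)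
    (Z : Ω → γ) (W : Ω → δ) :
    condMutInf μ X Y W ≤ condMutInf μ X (fun ω => (Z ω, Y ω)) W := by
  rw [condMutInf_chain]
  linarith [condMutInf_nonneg hμ X Z (fun ω => (Y ω, W ω))]

end

/-- If `I(S1; Y | X1, X2, W1) = 0` (the chain `S1 – X1 – Y` holds given
`(X2, W1)`) and `I(X2; S1 | W1) = 0` (`X2` and `S1` are conditionally independent
given `W1`), then `I(X1; Y | X2, W1) ≥ H(S1|W1) − H(S1|Y, W1)`. -/
theorem mac_side_info_converse_single_user
    {Ω S1t W1t X1t X2t Yt : Type}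
    [Fintype Ω] [Fintype S1t] [Fintype W1t] [Fintype X1t] [Fintype X2t] [Fintype Yt]
    (μ : Ω → ℝ) (hμ : IsPmf μ)
    (S1 : Ω → S1t) (W1 : Ω → W1t) (X1 : Ω → X1t) (X2 : Ω → X2t) (Y : Ω → Yt)
    (h1 : condMutInf μ S1 Y (fun ω => (X1 ω, X2 ω, W1 ω)) = 0)
    (h2 : condMutInf μ X2 S1 W1 = 0) :
    condEnt μ S1 W1 - condEnt μ S1 (fun ω => (Y ω, W1 ω)) ≤
      condMutInf μ X1 Y (fun ω => (X2 ω, W1 ω)) :=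
  calc condEnt μ S1 W1 - condEnt μ S1 (fun ω => (Y ω, W1 ω)) = condMutInf μ S1 Y W1 := rfl
    _ ≤ condMutInf μ S1 (fun ω => (X2 ω, Y ω)) W1 :=
      condMutInf_le_condMutInf_pair hμ.1 S1 Y X2 W1
    _ = condMutInf μ S1 X2 W1 + condMutInf μ S1 Y (fun ω => (X2 ω, W1 ω)) := by
      rw [condMutInf_pair_comm, condMutInf_chain]
    _ = condMutInf μ Y S1 (fun ω => (X2 ω, W1 ω)) := by
      rw [condMutInf_comm μ S1 X2, h2, zero_add, condMutInf_comm]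
    _ ≤ condMutInf μ Y (fun ω => (X1 ω, S1 ω)) (fun ω => (X2 ω, W1 ω)) :=
      condMutInf_le_condMutInf_pair hμ.1 Y S1 X1 _
    _ = condMutInf μ Y X1 (fun ω => (X2 ω, W1 ω)) +
          condMutInf μ Y S1 (fun ω => (X1 ω, X2 ω, W1 ω)) := by
      rw [condMutInf_pair_comm, condMutInf_chain]
    _ = condMutInf μ X1 Y (fun ω => (X2 ω, W1 ω)) := by
      rw [condMutInf_comm μ Y S1, h1, add_zero, condMutInf_comm]
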